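/- Let (G₁, a₁, b₁) be a tight chiral rotation pair of type (p₁, q₁) and let (G₂, a₂, b₂) be a tight rotation pair of type (p₂, q₂) (chiral or orientably regular). Set p = lcm(p₁, p₂), q = lcm(q₁, q₂), and let M be the subgroup of G₁ × G₂ generated by α := (a₁, a₂) and β := (b₁, b₂). If M has cardinality p·q, then (M, α, β) is a tight chiral rotation pair of type (p, q). -/

import Mathlib

/-- A rotation pair of type `(p, q)`: the group is generated by `a` and `b`,
`a` has order `p`, `b` has order `q`, `p, q ≥ 2`, `(a*b)^2 = 1`, and the cyclic
subgroups generated by `a` and `b` intersect trivially. -/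
def IsRotPair {G : Type*} [Group G] (a b : G) (p q : ℕ) : Prop :=
  Subgroup.closure ({a, b} : Set G) = ⊤ ∧ orderOf a = p ∧ orderOf b = q ∧
    2 ≤ p ∧ 2 ≤ q ∧ (a * b) ^ 2 = 1 ∧
    Subgroup.zpowers a ⊓ Subgroup.zpowers b = ⊥

/-- Tightness: every element is `a ^ i * b ^ j` for some integers `i, j`. -/
def IsTight {G : Type*} [Group G] (a b : G) : Prop :=
  ∀ g : G, ∃ i j : ℤ, g = a ^ i * b ^ j

/-- Orientably regular: some group automorphism inverts both generators. -/
def IsOrientablyRegular {G : Type*} [Group G] (a b : G) : Prop :=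
  ∃ φ : G ≃* G, φ a = a⁻¹ ∧ φ b = b⁻¹

/-- Chiral: no group automorphism inverts both generators. -/
def IsChiral {G : Type*} [Group G] (a b : G) : Prop :=
  ¬ IsOrientablyRegular a b

/-- `(G, a, b)` covers `(H, a', b')` if a homomorphism sends `a ↦ a'`, `b ↦ b'`. -/
def Covers {G H : Type*} [Group G] [Group H] (a b : G) (a' b' : H) : Prop :=
  ∃ f : G →* H, f a = a' ∧ f b = b'

/-- An atomic chiral rotation pair of type `(p, q)`: a tight chiral rotation pair
covering no tight chiral rotation pair of type `(p', q)` with `p' < p` nor one of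
type `(p, q')` with `q' < q`. -/
def IsAtomicPair {G : Type*} [Group G] (a b : G) (p q : ℕ) : Prop :=
  IsRotPair a b p q ∧ IsTight a b ∧ IsChiral a b ∧
  (∀ (H : Type) (instH : Group H) (_ : Finite H) (a' b' : H) (p' : ℕ), p' < p →
      @IsRotPair H instH a' b' p' q → @IsTight H instH a' b' → @IsChiral H instH a' b' →
      ¬ @Covers G H _ instH a b a' b') ∧
  (∀ (H : Type) (instH : Group H) (_ : Finite H) (a' b' : H) (q' : ℕ), q' < q →
      @IsRotPair H instH a' b' p q' → @IsTight H instH a' b' → @IsChiral H instH a' b' →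
      ¬ @Covers G H _ instH a b a' b')

/-- The mix of two rotation pairs: the subgroup of the direct product generated by
the diagonal elements. -/
def mixSubgroup {G₁ G₂ : Type*} [Group G₁] [Group G₂] (a₁ b₁ : G₁) (a₂ b₂ : G₂) :
    Subgroup (G₁ × G₂) :=
  Subgroup.closure {(a₁, a₂), (b₁, b₂)}

/-- The first distinguished generator of the mix. -/
def mixA {G₁ G₂ : Type*} [Group G₁] [Group G₂] (a₁ b₁ : G₁) (a₂ b₂ : G₂) :
    mixSubgroup a₁ b₁ a₂ b₂ :=
  ⟨(a₁, a₂), Subgroup.subset_closure (by simp)⟩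

/-- The second distinguished generator of the mix. -/
def mixB {G₁ G₂ : Type*} [Group G₁] [Group G₂] (a₁ b₁ : G₁) (a₂ b₂ : G₂) :
    mixSubgroup a₁ b₁ a₂ b₂ :=
  ⟨(b₁, b₂), Subgroup.subset_closure (by simp)⟩

/-!
The cyclic subgroups `⟨α⟩` and `⟨β⟩` of the mix meet trivially because they do so in each
component, so `|M| = p q = |⟨α⟩| |⟨β⟩|` makes `M = ⟨α⟩⟨β⟩` tight. The projection `M → G₁` is
onto, and by tightness its kernel consists of the `α ^ i * β ^ j` with `a₁ ^ i = b₁ ^ j = 1`.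
An automorphism of `M` inverting `α` and `β` therefore preserves this kernel and descends to an
automorphism of `G₁` inverting `a₁` and `b₁`, which chirality of `G₁` forbids.
-/

open Subgroup

section Tight

variable {G H : Type*} [Group G] [Group H] {a b : G}

theorem inf_zpowers_eq_bot_iff :
    zpowers a ⊓ zpowers b = ⊥ ↔ ∀ i j : ℤ, a ^ i = b ^ j → a ^ i = 1 := by
  refine ⟨fun h i j hij => ?_, fun h => eq_bot_iff.2 ?_⟩
  · have : a ^ i ∈ zpowers a ⊓ zpowers b := ⟨zpow_mem_zpowers a i, hij ▸ zpow_mem_zpowers b j⟩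
    rwa [h, mem_bot] at this
  · rintro x ⟨hxa, hxb⟩
    obtain ⟨i, rfl⟩ := mem_zpowers_iff.1 hxa
    obtain ⟨j, hj⟩ := mem_zpowers_iff.1 hxb
    exact h i j hj.symm

theorem zpow_eq_one_of_zpow_mul_zpow_eq_one (hab : zpowers a ⊓ zpowers b = ⊥) {i j : ℤ}
    (h : a ^ i * b ^ j = 1) : a ^ i = 1 ∧ b ^ j = 1 :=
  disjoint_iff_mul_eq_one.1 (disjoint_iff.2 hab) (zpow_mem_zpowers a i) (zpow_mem_zpowers b j) h

theorem isTight_of_card_eq_mul [Finite G] (hab : zpowers a ⊓ zpowers b = ⊥)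
    (hcard : Nat.card G = orderOf a * orderOf b) : IsTight a b := by
  have hcompl : IsComplement' (zpowers a) (zpowers b) :=
    isComplement'_of_card_mul_and_disjoint (by rw [Nat.card_zpowers, Nat.card_zpowers, hcard])
      (disjoint_iff.2 hab)
  intro g
  obtain ⟨⟨⟨_, i, rfl⟩, ⟨_, j, rfl⟩⟩, hg⟩ := hcompl.2 g
  exact ⟨i, j, hg.symm⟩

theorem IsTight.closure_eq_top (ht : IsTight a b) : closure {a, b} = ⊤ :=
  eq_top_iff.2 fun g _ => by
    obtain ⟨i, j, rfl⟩ := ht g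
    exact mul_mem (zpow_mem (subset_closure (by simp)) i) (zpow_mem (subset_closure (by simp)) j)

theorem IsTight.map {f : G →* H} (hf : Function.Surjective f) (ht : IsTight a b) :
    IsTight (f a) (f b) := by
  intro h
  obtain ⟨g, rfl⟩ := hf h
  obtain ⟨i, j, rfl⟩ := ht g
  exact ⟨i, j, by simp only [map_mul, map_zpow]⟩

theorem IsTight.surjective {f : H →* G} {c d : H} (ht : IsTight a b) (hc : f c = a)
    (hd : f d = b) : Function.Surjective f := by
  intro g
  obtain ⟨i, j, rfl⟩ := ht g
  exact ⟨c ^ i * d ^ j, by simp only [map_mul, map_zpow, hc, hd]⟩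

theorem IsTight.isOrientablyRegular_of_monoidHom (ht : IsTight a b) (ψ : G →* G)
    (ha : ψ a = a⁻¹) (hb : ψ b = b⁻¹) : IsOrientablyRegular a b := by
  have hψψ : ψ.comp ψ = MonoidHom.id G := by
    ext g
    obtain ⟨i, j, rfl⟩ := ht g
    simp [ha, hb]
  exact ⟨ψ.toMulEquiv ψ hψψ hψψ, ha, hb⟩

theorem IsOrientablyRegular.of_surjective (hreg : IsOrientablyRegular a b) (ht : IsTight a b)
    {f : G →* H} (hf : Function.Surjective f) (hab : zpowers (f a) ⊓ zpowers (f b) = ⊥) :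
    IsOrientablyRegular (f a) (f b) := by
  obtain ⟨ρ, hρa, hρb⟩ := hreg
  have hker : f.ker ≤ (f.comp ρ.toMonoidHom).ker := by
    intro g hg
    obtain ⟨i, j, rfl⟩ := ht g
    rw [MonoidHom.mem_ker, map_mul, map_zpow, map_zpow] at hg
    obtain ⟨hi, hj⟩ := zpow_eq_one_of_zpow_mul_zpow_eq_one hab hg
    rw [MonoidHom.mem_ker, MonoidHom.comp_apply, MulEquiv.coe_toMonoidHom]
    simp only [map_mul, map_zpow, map_inv, hρa, hρb, inv_zpow, hi, hj, inv_one, mul_one]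
  let ψ : H →* H := f.liftOfSurjective hf ⟨f.comp ρ.toMonoidHom, hker⟩
  have hψ (g : G) : ψ (f g) = f (ρ g) := f.liftOfRightInverse_comp_apply _ _ _ g
  exact (ht.map hf).isOrientablyRegular_of_monoidHom ψ (by rw [hψ, hρa, map_inv])
    (by rw [hψ, hρb, map_inv])

end Tight

section Mix

variable {G₁ G₂ : Type*} [Group G₁] [Group G₂] (a₁ b₁ : G₁) (a₂ b₂ : G₂)

@[simp]
theorem coe_mixA : (mixA a₁ b₁ a₂ b₂ : G₁ × G₂) = (a₁, a₂) := rfl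

@[simp]
theorem coe_mixB : (mixB a₁ b₁ a₂ b₂ : G₁ × G₂) = (b₁, b₂) := rfl

theorem orderOf_mixA : orderOf (mixA a₁ b₁ a₂ b₂) = (orderOf a₁).lcm (orderOf a₂) := by
  rw [← Subgroup.orderOf_coe, coe_mixA, Prod.orderOf_mk]

theorem orderOf_mixB : orderOf (mixB a₁ b₁ a₂ b₂) = (orderOf b₁).lcm (orderOf b₂) := by
  rw [← Subgroup.orderOf_coe, coe_mixB, Prod.orderOf_mk]

theorem mixA_mul_mixB_sq {a₁ b₁ : G₁} {a₂ b₂ : G₂} (h₁ : (a₁ * b₁) ^ 2 = 1)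
    (h₂ : (a₂ * b₂) ^ 2 = 1) : (mixA a₁ b₁ a₂ b₂ * mixB a₁ b₁ a₂ b₂) ^ 2 = 1 :=
  Subtype.ext (Prod.ext h₁ h₂)

theorem inf_zpowers_mixA_mixB_eq_bot {a₁ b₁ : G₁} {a₂ b₂ : G₂}
    (h₁ : zpowers a₁ ⊓ zpowers b₁ = ⊥) (h₂ : zpowers a₂ ⊓ zpowers b₂ = ⊥) :
    zpowers (mixA a₁ b₁ a₂ b₂) ⊓ zpowers (mixB a₁ b₁ a₂ b₂) = ⊥ := by
  refine inf_zpowers_eq_bot_iff.2 fun i j hij => ?_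
  obtain ⟨hij₁, hij₂⟩ : a₁ ^ i = b₁ ^ j ∧ a₂ ^ i = b₂ ^ j := by
    simpa [Prod.ext_iff] using congrArg Subtype.val hij
  ext <;> simp [inf_zpowers_eq_bot_iff.1 h₁ i j hij₁, inf_zpowers_eq_bot_iff.1 h₂ i j hij₂]

end Mix

theorem mix_tight_chiral_general {G₁ G₂ : Type*} [Group G₁] [Group G₂] [Finite G₁] [Finite G₂]
    (a₁ b₁ : G₁) (a₂ b₂ : G₂) (p₁ q₁ p₂ q₂ : ℕ)
    (hpair₁ : IsRotPair a₁ b₁ p₁ q₁) (htight₁ : IsTight a₁ b₁) (hchiral₁ : IsChiral a₁ b₁)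
    (hpair₂ : IsRotPair a₂ b₂ p₂ q₂)
    (hcard : Nat.card (mixSubgroup a₁ b₁ a₂ b₂) = Nat.lcm p₁ p₂ * Nat.lcm q₁ q₂) :
    IsRotPair (mixA a₁ b₁ a₂ b₂) (mixB a₁ b₁ a₂ b₂) (Nat.lcm p₁ p₂) (Nat.lcm q₁ q₂) ∧
    IsTight (mixA a₁ b₁ a₂ b₂) (mixB a₁ b₁ a₂ b₂) ∧
    IsChiral (mixA a₁ b₁ a₂ b₂) (mixB a₁ b₁ a₂ b₂) := by
  obtain ⟨-, rfl, rfl, hp₁, hq₁, hab₁, hint₁⟩ := hpair₁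
  obtain ⟨-, rfl, rfl, hp₂, hq₂, hab₂, hint₂⟩ := hpair₂
  have hint := inf_zpowers_mixA_mixB_eq_bot hint₁ hint₂
  have htight : IsTight (mixA a₁ b₁ a₂ b₂) (mixB a₁ b₁ a₂ b₂) :=
    isTight_of_card_eq_mul hint (by rw [hcard, orderOf_mixA, orderOf_mixB])
  have two_le_lcm {m n : ℕ} (hm : 2 ≤ m) (hn : 2 ≤ n) : 2 ≤ m.lcm n :=
    hm.trans (Nat.le_of_dvd (Nat.lcm_pos (by omega) (by omega)) (Nat.dvd_lcm_left m n))
  refine ⟨⟨htight.closure_eq_top, orderOf_mixA .., orderOf_mixB .., two_le_lcm hp₁ hp₂,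
    two_le_lcm hq₁ hq₂, mixA_mul_mixB_sq hab₁ hab₂, hint⟩, htight, fun hreg => hchiral₁ ?_⟩
  let fst : mixSubgroup a₁ b₁ a₂ b₂ →* G₁ := (MonoidHom.fst G₁ G₂).comp (mixSubgroup ..).subtype
  have hfst : Function.Surjective fst :=
    htight₁.surjective (c := mixA a₁ b₁ a₂ b₂) (d := mixB a₁ b₁ a₂ b₂) rfl rfl
  exact hreg.of_surjective htight hfst hint₁

/-- If the mix of a tight chiral pair with a tight pair has order `lcm(p₁,p₂) · lcm(q₁,q₂)`,
then the mix is a tight chiral rotation pair of that type. -/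
theorem mix_tight_chiral {G₁ G₂ : Type*} [Group G₁] [Group G₂] [Finite G₁] [Finite G₂]
    (a₁ b₁ : G₁) (a₂ b₂ : G₂) (p₁ q₁ p₂ q₂ : ℕ)
    (hpair₁ : IsRotPair a₁ b₁ p₁ q₁) (htight₁ : IsTight a₁ b₁) (hchiral₁ : IsChiral a₁ b₁)
    (hpair₂ : IsRotPair a₂ b₂ p₂ q₂) (htight₂ : IsTight a₂ b₂)
    (hcard : Nat.card (mixSubgroup a₁ b₁ a₂ b₂) = Nat.lcm p₁ p₂ * Nat.lcm q₁ q₂) :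
    IsRotPair (mixA a₁ b₁ a₂ b₂) (mixB a₁ b₁ a₂ b₂) (Nat.lcm p₁ p₂) (Nat.lcm q₁ q₂) ∧
    IsTight (mixA a₁ b₁ a₂ b₂) (mixB a₁ b₁ a₂ b₂) ∧
    IsChiral (mixA a₁ b₁ a₂ b₂) (mixB a₁ b₁ a₂ b₂) :=
  mix_tight_chiral_general a₁ b₁ a₂ b₂ p₁ q₁ p₂ q₂ hpair₁ htight₁ hchiral₁ hpair₂ hcard
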